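/- For every word w = w_1⋯w_n over {L,R} and every d ∈ ℤ, P_w(d) = P_{w'}(d), where w' = w_n⋯w_1 is the reversal of w. -/

import Mathlib

/-- The probability mass functions `P t` on ℤ, defined by
`P 1 = δ₀`, `P (2t) = P t`, `P (2t+1) d = ½ P (t+1) (d+1) + ½ P t (d-1)`. -/
noncomputable def P : ℕ → ℤ → ℝ
  | 0, _ => 0
  | 1, d => if d = 0 then 1 else 0
  | (n+2), d =>
      if h : (n + 2) % 2 = 0 then P ((n+2)/2) d
      else (1/2) * P ((n+2)/2 + 1) (d+1) + (1/2) * P ((n+2)/2) (d-1)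
  decreasing_by all_goals omega

/-- Letters of the alphabet. -/
inductive LR | L | R
deriving DecidableEq

/-- One step of the identification of words with odd integers: `L : t ↦ 2t-1`, `R : t ↦ 2t+1`. -/
def LRstep (t : ℕ) : LR → ℕ
  | LR.L => 2 * t - 1
  | LR.R => 2 * t + 1

/-- The odd integer associated to a word over `{L,R}`, starting from 3. -/
def hword (w : List LR) : ℕ := w.foldl LRstep 3

/-!
Let `Q t ∈ ℝ[ℤ]` be the generating function of `P t`, so that `Q (2t) = Q t` and
`Q (2t+1) = a Q (t+1) + b Q t` with `a = X⁻¹/2`, `b = X/2`. If `h(w) = 2m+1`, appending the letter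
`c` to `w` maps `(Q (m+1), Q m)` by a fixed 2×2 matrix `N_c`, so
`Q (h w) = (a, b) ⬝ N_{w_n} ⋯ N_{w_1} (Q 1, Q 1)`. The symmetric matrix
`K = [[a(a-1), ab], [ab, b(b-1)]]` satisfies `K N_c = N_cᵀ K` and `(1, 1) K = (a+b-1) (a, b)`,
so `(a+b-1) Q (h w)` is a value of the symmetric bilinear form of `K` that is unchanged when the
matrix product is reversed. Finally `a + b - 1 ≠ 0` can be cancelled in the domain `ℝ[ℤ]`.
-/

open Matrix

section TransferMatrix

variable {R : Type*} [CommRing R] (a b : R)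

def transferMatrix : LR → Matrix (Fin 2) (Fin 2) R
  | .L => !![a, b; 0, 1]
  | .R => !![1, 0; a, b]

def wordMatrix (w : List LR) : Matrix (Fin 2) (Fin 2) R := (w.map (transferMatrix a b)).prod

@[simp]
theorem wordMatrix_nil : wordMatrix a b [] = 1 := rfl

@[simp]
theorem wordMatrix_cons (c : LR) (w : List LR) :
    wordMatrix a b (c :: w) = transferMatrix a b c * wordMatrix a b w := by
  simp [wordMatrix]

@[simp]
theorem wordMatrix_append_singleton (w : List LR) (c : LR) :
    wordMatrix a b (w ++ [c]) = wordMatrix a b w * transferMatrix a b c := by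
  simp [wordMatrix]

def symmetrizer : Matrix (Fin 2) (Fin 2) R := !![a * (a - 1), a * b; a * b, b * (b - 1)]

theorem vecMul_symmetrizer (x : Fin 2 → R) : x ᵥ* symmetrizer a b = symmetrizer a b *ᵥ x := by
  rw [← mulVec_transpose]
  congr 1
  ext i j
  fin_cases i <;> fin_cases j <;> rfl

theorem symmetrizer_mul_transferMatrix (c : LR) :
    symmetrizer a b * transferMatrix a b c = (transferMatrix a b c)ᵀ * symmetrizer a b := by
  ext i j
  cases c <;> fin_cases i <;> fin_cases j <;>
    simp [symmetrizer, transferMatrix, mul_apply, Fin.sum_univ_two] <;> ring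

theorem symmetrizer_mul_wordMatrix (w : List LR) :
    symmetrizer a b * wordMatrix a b w = (wordMatrix a b w.reverse)ᵀ * symmetrizer a b := by
  induction w with
  | nil => simp
  | cons c w ih =>
    rw [wordMatrix_cons, List.reverse_cons, wordMatrix_append_singleton, transpose_mul,
      ← Matrix.mul_assoc, symmetrizer_mul_transferMatrix, Matrix.mul_assoc, ih, Matrix.mul_assoc]

theorem one_vecMul_symmetrizer : 1 ᵥ* symmetrizer a b = (a + b - 1) • ![a, b] := by
  ext i
  fin_cases i <;> simp [symmetrizer, vecMul, dotProduct, Fin.sum_univ_two] <;> ring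

theorem vecMul_symmetrizer_dotProduct_wordMatrix_reverse (x : Fin 2 → R) (w : List LR) :
    (x ᵥ* symmetrizer a b) ⬝ᵥ (wordMatrix a b w.reverse *ᵥ x) =
      (x ᵥ* symmetrizer a b) ⬝ᵥ (wordMatrix a b w *ᵥ x) := by
  calc (x ᵥ* symmetrizer a b) ⬝ᵥ (wordMatrix a b w.reverse *ᵥ x)
      = x ⬝ᵥ ((wordMatrix a b w.reverse)ᵀ * symmetrizer a b) *ᵥ x := by
        rw [dotProduct_comm, vecMul_symmetrizer, ← vecMul_transpose, ← dotProduct_mulVec,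
          mulVec_mulVec]
    _ = x ⬝ᵥ (symmetrizer a b * wordMatrix a b w) *ᵥ x := by
        rw [symmetrizer_mul_wordMatrix]
    _ = (x ᵥ* symmetrizer a b) ⬝ᵥ (wordMatrix a b w *ᵥ x) := by
        rw [← mulVec_mulVec, dotProduct_mulVec]

end TransferMatrix

theorem hword_append_singleton (w : List LR) (c : LR) :
    hword (w ++ [c]) = LRstep (hword w) c := by
  simp [hword]

theorem exists_hword_eq_two_mul_add_one (w : List LR) : ∃ m, 1 ≤ m ∧ hword w = 2 * m + 1 := by
  induction w using List.reverseRecOn with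
  | nil => exact ⟨1, le_rfl, rfl⟩
  | append_singleton w c ih =>
    obtain ⟨m, hm, hw⟩ := ih
    rw [hword_append_singleton, hw]
    cases c
    · exact ⟨2 * m, by omega, by simp only [LRstep]; omega⟩
    · exact ⟨2 * m + 1, by omega, rfl⟩

section BinaryRecurrence

variable {R : Type*} [CommRing R] {a b : R} {Q : ℕ → R}

theorem wordMatrix_reverse_mulVec (h_even : ∀ t, 1 ≤ t → Q (2 * t) = Q t)
    (h_odd : ∀ t, 1 ≤ t → Q (2 * t + 1) = a * Q (t + 1) + b * Q t) (w : List LR) :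
    wordMatrix a b w.reverse *ᵥ (fun _ => Q 1) = ![Q (hword w / 2 + 1), Q (hword w / 2)] := by
  induction w using List.reverseRecOn with
  | nil =>
    ext i
    fin_cases i <;> simp [hword, h_even 1 le_rfl]
  | append_singleton w c ih =>
    obtain ⟨m, hm, hw⟩ := exists_hword_eq_two_mul_add_one w
    rw [List.reverse_append, List.reverse_singleton, List.singleton_append, wordMatrix_cons,
      ← mulVec_mulVec, ih, hword_append_singleton, hw, show (2 * m + 1) / 2 = m by omega]
    cases c
    · rw [show LRstep (2 * m + 1) .L / 2 = 2 * m by simp only [LRstep]; omega, h_odd m hm,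
        h_even m hm]
      ext i
      fin_cases i <;> simp [transferMatrix, mul_comm]
    · rw [show LRstep (2 * m + 1) .R / 2 = 2 * m + 1 by simp only [LRstep]; omega, h_odd m hm,
        show 2 * m + 1 + 1 = 2 * (m + 1) by ring, h_even (m + 1) (by omega)]
      ext i
      fin_cases i <;> simp [transferMatrix, mul_comm]

theorem apply_hword_eq_dotProduct (h_even : ∀ t, 1 ≤ t → Q (2 * t) = Q t)
    (h_odd : ∀ t, 1 ≤ t → Q (2 * t + 1) = a * Q (t + 1) + b * Q t) (w : List LR) :
    Q (hword w) = Q 1 * (![a, b] ⬝ᵥ (wordMatrix a b w.reverse *ᵥ 1)) := by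
  obtain ⟨m, hm, hw⟩ := exists_hword_eq_two_mul_add_one w
  have hv := wordMatrix_reverse_mulVec h_even h_odd w
  rw [show (fun _ => Q 1) = Q 1 • (1 : Fin 2 → R) by ext; simp, mulVec_smul] at hv
  rw [← smul_eq_mul, ← dotProduct_smul, hv, hw, show (2 * m + 1) / 2 = m by omega, h_odd m hm]
  simp [dotProduct, Fin.sum_univ_two]

theorem apply_hword_reverse (hab : IsLeftRegular (a + b - 1))
    (h_even : ∀ t, 1 ≤ t → Q (2 * t) = Q t)
    (h_odd : ∀ t, 1 ≤ t → Q (2 * t + 1) = a * Q (t + 1) + b * Q t) (w : List LR) :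
    Q (hword w) = Q (hword w.reverse) := by
  have key (w : List LR) : (a + b - 1) * Q (hword w) =
      Q 1 * ((1 ᵥ* symmetrizer a b) ⬝ᵥ (wordMatrix a b w.reverse *ᵥ 1)) := by
    rw [apply_hword_eq_dotProduct h_even h_odd, one_vecMul_symmetrizer, smul_dotProduct,
      smul_eq_mul]
    ring
  apply hab
  dsimp only
  rw [key, key, List.reverse_reverse, vecMul_symmetrizer_dotProduct_wordMatrix_reverse]

end BinaryRecurrence

section GroupAlgebra

open AddMonoidAlgebra

noncomputable def genFun : ℕ → AddMonoidAlgebra ℝ ℤ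
  | 0 => 0
  | 1 => 1
  | (n + 2) =>
      if (n + 2) % 2 = 0 then genFun ((n + 2) / 2)
      else single (-1) (1 / 2) * genFun ((n + 2) / 2 + 1) + single 1 (1 / 2) * genFun ((n + 2) / 2)
  decreasing_by all_goals omega

theorem genFun_two_mul {t : ℕ} (ht : 1 ≤ t) : genFun (2 * t) = genFun t := by
  obtain ⟨s, rfl⟩ := Nat.exists_eq_add_of_le' ht
  rw [show 2 * (s + 1) = 2 * s + 2 by ring, genFun, if_pos (by omega)]
  congr 1
  omega

theorem genFun_two_mul_add_one {t : ℕ} (ht : 1 ≤ t) :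
    genFun (2 * t + 1) = single (-1) (1 / 2) * genFun (t + 1) + single 1 (1 / 2) * genFun t := by
  obtain ⟨s, rfl⟩ := Nat.exists_eq_add_of_le' ht
  rw [show 2 * (s + 1) + 1 = 2 * s + 1 + 2 by ring, genFun, if_neg (by omega),
    show (2 * s + 1 + 2) / 2 = s + 1 by omega]

theorem P_two_mul {t : ℕ} (ht : 1 ≤ t) (d : ℤ) : P (2 * t) d = P t d := by
  obtain ⟨s, rfl⟩ := Nat.exists_eq_add_of_le' ht
  rw [show 2 * (s + 1) = 2 * s + 2 by ring, P, dif_pos (by omega)]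
  congr 1
  omega

theorem P_two_mul_add_one {t : ℕ} (ht : 1 ≤ t) (d : ℤ) :
    P (2 * t + 1) d = 1 / 2 * P (t + 1) (d + 1) + 1 / 2 * P t (d - 1) := by
  obtain ⟨s, rfl⟩ := Nat.exists_eq_add_of_le' ht
  rw [show 2 * (s + 1) + 1 = 2 * s + 1 + 2 by ring, P, dif_neg (by omega),
    show (2 * s + 1 + 2) / 2 = s + 1 by omega]

theorem P_eq_coeff_genFun (t : ℕ) (d : ℤ) : P t d = (genFun t).coeff d := by
  induction t using Nat.strong_induction_on generalizing d with
  | _ t ih =>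
  obtain ⟨s, rfl | rfl⟩ := Nat.even_or_odd' t
  · rcases Nat.eq_zero_or_pos s with rfl | hs
    · simp [P, genFun]
    · rw [P_two_mul hs, genFun_two_mul hs]
      exact ih s (by omega) d
  · rcases Nat.eq_zero_or_pos s with rfl | hs
    · rw [Nat.mul_zero, Nat.zero_add, P, genFun, one_def, coeff_single, Finsupp.single_apply]
      simp only [eq_comm]
    · rw [P_two_mul_add_one hs, genFun_two_mul_add_one hs, coeff_add, Finsupp.add_apply,
        coeff_single_mul_apply, coeff_single_mul_apply, ih (s + 1) (by omega),
        ih s (by omega)]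
      ring_nf

theorem isLeftRegular_single_add_single_sub_one :
    IsLeftRegular (single (-1) (1 / 2) + single 1 (1 / 2) - 1 : AddMonoidAlgebra ℝ ℤ) := by
  refine (IsRegular.of_ne_zero' fun h => ?_).left
  have h1 := congrArg (fun f : AddMonoidAlgebra ℝ ℤ => f.coeff 1) h
  simp only [coeff_sub, coeff_add, one_def, coeff_single, coeff_zero, Finsupp.sub_apply,
    Finsupp.add_apply, Finsupp.single_apply, Finsupp.coe_zero, Pi.zero_apply] at h1
  norm_num at h1

end GroupAlgebra

/-- Reversal symmetry: `P_w(d) = P_{w'}(d)`, where `w'` is the reversal of `w`. -/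
theorem P_word_reverse (w : List LR) (d : ℤ) :
    P (hword w) d = P (hword w.reverse) d := by
  rw [P_eq_coeff_genFun, P_eq_coeff_genFun,
    apply_hword_reverse isLeftRegular_single_add_single_sub_one
      (fun _ => genFun_two_mul) (fun _ => genFun_two_mul_add_one) w]
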